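/- arXiv:math/9712240 — 3 statements merged into one kernel-verified Lean document; each statement's English description precedes it below -/
import Mathlib

section
/- Under the k-fold convolution of the biased riffle shuffle P_{n,a,p}, with the convention that every permutation has a descent at position n, the expected number of descents of a random permutation equals 1 + ((n−1)/2)·(1 − (p_1² + ... + p_a²)^k). -/
open Finset

/-- The value of `π` at the (0-indexed) position `i`, extended by `0` outside the range. -/
def permVal (n : ℕ) (π : Equiv.Perm (Fin n)) (i : ℕ) : ℕ :=
  if h : i < n then (π ⟨i, h⟩ : ℕ) else 0

/-- The descent set of `π ∈ S_n` (with the convention that `n` is always a descent). -/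
def descentSet (n : ℕ) (π : Equiv.Perm (Fin n)) : Finset ℕ :=
  insert n ((Finset.Ico 1 n).filter fun i => permVal n π i < permVal n π (i - 1))

/-- The biased riffle shuffle measure on `S_n` for a probability vector `p` indexed by
a linearly ordered alphabet `α`, via the inverse description: each card is independently
assigned a letter (letter `c` with probability `p c`), the cards are stably sorted by
letter (`Tuple.sort`), and the shuffle is the inverse of the resulting rearrangement. -/
noncomputable def shuffleP (n : ℕ) {α : Type*} [Fintype α] [LinearOrder α]
    (p : α → ℝ) (π : Equiv.Perm (Fin n)) : ℝ :=
  ∑ f ∈ Finset.univ.filter (fun f : Fin n → α => (Tuple.sort f)⁻¹ = π), ∏ i, p (f i)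

/-- The `k`-fold convolution of a probability assignment `P` on `S_n`. -/
noncomputable def convPow (n : ℕ) (P : Equiv.Perm (Fin n) → ℝ) :
    ℕ → Equiv.Perm (Fin n) → ℝ
  | 0 => fun π => if π = 1 then 1 else 0
  | k + 1 => fun π => ∑ σ : Equiv.Perm (Fin n), P σ * convPow n P k (σ⁻¹ * π)

set_option linter.unusedSectionVars false
set_option linter.unusedVariables false

section SortAux
variable {n : ℕ} {α : Type*} [LinearOrder α] {β : Type*} [LinearOrder β]

lemma rank_lt_iff (f : Fin n → α) (i j : Fin n) :
    (Tuple.sort f)⁻¹ i < (Tuple.sort f)⁻¹ j ↔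
      toLex (f i, i) < toLex (f j, j) := by
  have h : StrictMono ((Tuple.sort f).trans (Tuple.graphEquiv₁ f)) :=
    Tuple.eq_sort_iff'.mp rfl
  have := h.lt_iff_lt (a := (Tuple.sort f)⁻¹ i) (b := (Tuple.sort f)⁻¹ j)
  rw [← this]
  simp only [Equiv.trans_apply, Equiv.Perm.inv_def, Equiv.apply_symm_apply]
  rfl

/-- indicator of a descent of the shuffled deck at position `i`, read off the word. -/
noncomputable def desc (f : Fin n → α) (i : ℕ) : ℝ :=
  if h : i < n then
    (if f ⟨i, h⟩ < f ⟨i - 1, lt_of_le_of_lt (Nat.sub_le _ _) h⟩ then 1 else 0)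
  else 0

lemma descent_card (hn : 1 ≤ n) (f : Fin n → α) :
    ((descentSet n ((Tuple.sort f)⁻¹)).card : ℝ) =
      1 + ∑ i ∈ Finset.Ico 1 n, desc f i := by
  rw [descentSet, Finset.card_insert_of_notMem (by
    intro hmem
    have := Finset.mem_of_mem_filter n hmem
    simp at this)]
  rw [Finset.card_filter]
  push_cast
  rw [add_comm]
  congr 1
  refine Finset.sum_congr rfl fun i hi => ?_
  rw [Finset.mem_Ico] at hi
  obtain ⟨hi1, hi2⟩ := hi
  have hi2' : i - 1 < n := lt_of_le_of_lt (Nat.sub_le _ _) hi2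
  rw [desc, dif_pos hi2]
  congr 1
  rw [permVal, permVal, dif_pos hi2, dif_pos hi2']
  rw [show ((Tuple.sort f)⁻¹ ⟨i, hi2⟩ : ℕ) < ((Tuple.sort f)⁻¹ ⟨i - 1, hi2'⟩ : ℕ) ↔
      (Tuple.sort f)⁻¹ ⟨i, hi2⟩ < (Tuple.sort f)⁻¹ ⟨i - 1, hi2'⟩ from Iff.rfl]
  rw [rank_lt_iff, Prod.Lex.lt_iff]
  simp only [eq_iff_iff]
  constructor
  · rintro (h | ⟨-, h⟩)
    · exact h
    · exfalso
      rw [Fin.mk_lt_mk] at h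
      simp only [ofLex_toLex, Fin.mk_lt_mk] at h
      omega
  · exact Or.inl

lemma tie_sort (f : Fin n → α) : ∀ i j, i < j → f (Tuple.sort f i) = f (Tuple.sort f j) →
    Tuple.sort f i < Tuple.sort f j := (Tuple.eq_sort_iff.mp rfl).2

lemma sort_comp (u : Fin n → α) (v : Fin n → β) :
    Tuple.sort (fun x => toLex (u ((Tuple.sort v)⁻¹ x), v x)) =
      Tuple.sort v * Tuple.sort u := by
  symm
  rw [Tuple.eq_sort_iff]
  have hsimp : ∀ i : Fin n,
      (fun x => toLex (u ((Tuple.sort v)⁻¹ x), v x)) ((Tuple.sort v * Tuple.sort u) i)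
        = toLex (u (Tuple.sort u i), v (Tuple.sort v (Tuple.sort u i))) := by
    intro i
    simp [Equiv.Perm.mul_apply, Equiv.Perm.inv_def]
  constructor
  · intro i j hij
    simp only [Function.comp_apply, hsimp]
    rw [Prod.Lex.le_iff]
    rcases lt_or_eq_of_le ((Tuple.monotone_sort u) hij) with hlt | heq
    · exact Or.inl hlt
    · refine Or.inr ⟨heq, ?_⟩
      rcases lt_or_eq_of_le hij with hij' | rfl
      · exact (Tuple.monotone_sort v) (tie_sort u i j hij' heq).le
      · exact le_rfl
  · intro i j hij heq
    simp only [hsimp, toLex_inj, Prod.mk.injEq] at heq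
    have h1 : Tuple.sort u i < Tuple.sort u j := tie_sort u i j hij heq.1
    exact tie_sort v _ _ h1 heq.2

/-- The pairing equivalence for composing inverse shuffles. -/
def pairEquiv (n : ℕ) (α β : Type*) [LinearOrder α] [LinearOrder β] :
    ((Fin n → α) × (Fin n → β)) ≃ (Fin n → Lex (α × β)) where
  toFun fg := fun x => toLex (fg.1 ((Tuple.sort fg.2)⁻¹ x), fg.2 x)
  invFun h :=
    (fun y => (ofLex (h (Tuple.sort (fun x => (ofLex (h x)).2) y))).1,
     fun x => (ofLex (h x)).2)
  left_inv := by
    rintro ⟨f, g⟩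
    simp only [Prod.mk.injEq]
    constructor
    · funext y
      simp [Equiv.Perm.inv_def]
    · rfl
  right_inv := by
    intro h
    funext x
    simp [Equiv.Perm.inv_def]

lemma pairEquiv_symm_prop {n : ℕ} {α β : Type*} [LinearOrder α] [LinearOrder β]
    (h : Fin n → Lex (α × β)) :
    h = pairEquiv n α β ((pairEquiv n α β).symm h) := by
  simp

end SortAux

section StepLemma
variable {n : ℕ} {α β : Type*} [Fintype α] [LinearOrder α] [Fintype β] [LinearOrder β]

lemma shuffle_conv (u : α → ℝ) (v : β → ℝ) (π : Equiv.Perm (Fin n)) :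
    ∑ σ : Equiv.Perm (Fin n), shuffleP n u σ * shuffleP n v (σ⁻¹ * π)
      = shuffleP n (fun c : Lex (α × β) => u (ofLex c).1 * v (ofLex c).2) π := by
  -- first collapse the σ sum using fibers of f ↦ (sort f)⁻¹
  have step1 : ∑ σ : Equiv.Perm (Fin n), shuffleP n u σ * shuffleP n v (σ⁻¹ * π)
      = ∑ f : Fin n → α, (∏ i, u (f i)) * shuffleP n v (Tuple.sort f * π) := by
    rw [← Finset.sum_fiberwise Finset.univ (fun f : Fin n → α => (Tuple.sort f)⁻¹)
      (fun f => (∏ i, u (f i)) * shuffleP n v (Tuple.sort f * π))]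
    refine Finset.sum_congr rfl fun σ _ => ?_
    rw [shuffleP, Finset.sum_mul]
    refine Finset.sum_congr rfl fun f hf => ?_
    simp only [Finset.mem_filter] at hf
    congr 1
    rw [← hf.2]
    simp [mul_assoc]
  rw [step1]
  -- expand inner shuffleP and turn filters into ifs
  have step2 : ∀ f : Fin n → α, (∏ i, u (f i)) * shuffleP n v (Tuple.sort f * π)
      = ∑ g : Fin n → β, (if (Tuple.sort g)⁻¹ = Tuple.sort f * π
          then (∏ i, u (f i)) * ∏ i, v (g i) else 0) := by
    intro f
    rw [shuffleP, Finset.mul_sum, Finset.sum_filter]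
  simp only [step2]
  rw [shuffleP, Finset.sum_filter]
  rw [← Fintype.sum_prod_type' (f := fun (f : Fin n → α) (g : Fin n → β) =>
    if (Tuple.sort g)⁻¹ = Tuple.sort f * π
      then (∏ i, u (f i)) * ∏ i, v (g i) else 0)]
  rw [← Equiv.sum_comp (pairEquiv n α β).symm
    (fun fg : (Fin n → α) × (Fin n → β) =>
      if (Tuple.sort fg.2)⁻¹ = Tuple.sort fg.1 * π
        then (∏ i, u (fg.1 i)) * ∏ i, v (fg.2 i) else 0)]
  refine Finset.sum_congr rfl fun h _ => ?_
  set f := ((pairEquiv n α β).symm h).1 with hf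
  set g := ((pairEquiv n α β).symm h).2 with hg
  have hh : h = fun x => toLex (f ((Tuple.sort g)⁻¹ x), g x) := pairEquiv_symm_prop h
  have hsort : Tuple.sort h = Tuple.sort g * Tuple.sort f := by
    conv_lhs => rw [hh]
    exact sort_comp f g
  have hcond : ((Tuple.sort g)⁻¹ = Tuple.sort f * π) ↔ ((Tuple.sort h)⁻¹ = π) := by
    rw [hsort, mul_inv_rev]
    constructor
    · intro hc; rw [hc]; group
    · intro hc; rw [← hc]; group
  by_cases hc : (Tuple.sort h)⁻¹ = π
  · rw [if_pos hc, if_pos (hcond.mpr hc)]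
    conv_rhs => rw [hh]
    have : ∏ i, u (f ((Tuple.sort g)⁻¹ i)) = ∏ i, u (f i) :=
      Equiv.prod_comp (Tuple.sort g)⁻¹ (fun i => u (f i))
    simp only [ofLex_toLex]
    rw [Finset.prod_mul_distrib, this]
  · rw [if_neg hc, if_neg (fun hcc => hc (hcond.mp hcc))]
end StepLemma

section Marginals
variable {n : ℕ} {α : Type*} [Fintype α] [LinearOrder α]

lemma sum_prod_one (q : α → ℝ) (hq : ∑ x, q x = 1) :
    ∑ f : Fin n → α, ∏ i, q (f i) = 1 := by
  have := Finset.prod_univ_sum (fun _ : Fin n => (Finset.univ : Finset α))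
    (fun _ x => q x)
  rw [Fintype.piFinset_univ] at this
  rw [← this]
  simp [hq]

lemma marginal2 (q : α → ℝ) (hq : ∑ x, q x = 1) (j j' : Fin n) (hjj : j ≠ j')
    (w : α → α → ℝ) :
    ∑ f : Fin n → α, (∏ i, q (f i)) * w (f j) (f j')
      = ∑ x : α, ∑ y : α, q x * q y * w x y := by
  have key : ∀ x y : α,
      ∑ f : Fin n → α, (∏ i, q (f i)) *
        ((if f j = x then (1:ℝ) else 0) * (if f j' = y then 1 else 0))
      = q x * q y := by
    intro x y
    set Q : Fin n → α → ℝ := fun i z =>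
      if i = j then (if z = x then q z else 0)
      else if i = j' then (if z = y then q z else 0) else q z with hQ
    have hprod : ∀ f : Fin n → α,
        (∏ i, q (f i)) * ((if f j = x then (1:ℝ) else 0) * (if f j' = y then 1 else 0))
          = ∏ i, Q i (f i) := by
      intro f
      by_cases h1 : f j = x
      · by_cases h2 : f j' = y
        · rw [if_pos h1, if_pos h2]
          rw [mul_one, mul_one]
          refine Finset.prod_congr rfl fun i _ => ?_
          by_cases hij : i = j
          · subst hij; simp [hQ, h1]
          · by_cases hij' : i = j'
            · subst hij'; simp [hQ, h2, hij]
            · simp [hQ, hij, hij']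
        · rw [if_neg h2, mul_zero, mul_zero]
          symm
          refine Finset.prod_eq_zero (Finset.mem_univ j') ?_
          simp [hQ, Ne.symm hjj, h2]
      · rw [if_neg h1, zero_mul, mul_zero]
        symm
        refine Finset.prod_eq_zero (Finset.mem_univ j) ?_
        simp [hQ, h1]
    simp only [hprod]
    have := Finset.prod_univ_sum (fun _ : Fin n => (Finset.univ : Finset α)) Q
    rw [Fintype.piFinset_univ] at this
    rw [← this]
    have hc : ∀ i : Fin n, (∑ z, Q i z) =
        if i = j then q x else if i = j' then q y else 1 := by
      intro i
      simp only [hQ]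
      split
      · simp [Finset.sum_ite_eq']
      · split
        · simp [Finset.sum_ite_eq']
        · exact hq
    simp only [hc]
    rw [← Finset.mul_prod_erase Finset.univ _ (Finset.mem_univ j)]
    rw [if_pos rfl]
    rw [← Finset.mul_prod_erase _ _ (Finset.mem_erase.mpr ⟨Ne.symm hjj, Finset.mem_univ j'⟩)]
    rw [if_neg (Ne.symm hjj), if_pos rfl]
    rw [Finset.prod_congr rfl (fun i hi => ?_), Finset.prod_const_one, mul_one]
    · simp only [Finset.mem_erase] at hi
      rw [if_neg hi.2.1, if_neg hi.1]
  calc ∑ f : Fin n → α, (∏ i, q (f i)) * w (f j) (f j')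
      = ∑ f : Fin n → α, ∑ x : α, ∑ y : α,
          (∏ i, q (f i)) * ((if f j = x then (1:ℝ) else 0) * (if f j' = y then 1 else 0)) * w x y := by
        refine Finset.sum_congr rfl fun f _ => ?_
        rw [Finset.sum_comm]
        rw [Finset.sum_eq_single (f j')]
        · rw [Finset.sum_eq_single (f j)]
          · simp
          · intro x _ hx; simp [Ne.symm hx]
          · simp
        · intro y _ hy
          simp [Ne.symm hy]
        · simp
    _ = ∑ x : α, ∑ y : α, q x * q y * w x y := by
        rw [Finset.sum_comm]
        refine Finset.sum_congr rfl fun x _ => ?_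
        rw [Finset.sum_comm]
        refine Finset.sum_congr rfl fun y _ => ?_
        rw [← Finset.sum_mul, key]

lemma sum_lt_pairs (q : α → ℝ) (hq : ∑ x, q x = 1) :
    ∑ x : α, ∑ y : α, q x * q y * (if x < y then (1:ℝ) else 0)
      = (1 - ∑ x, q x ^ 2) / 2 := by
  have htot : ∑ x : α, ∑ y : α, q x * q y = 1 := by
    simp only [← Finset.mul_sum, hq, mul_one]
  have hsym : ∑ x : α, ∑ y : α, q x * q y * (if x < y then (1:ℝ) else 0)
      = ∑ x : α, ∑ y : α, q x * q y * (if y < x then (1:ℝ) else 0) := by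
    rw [Finset.sum_comm]
    refine Finset.sum_congr rfl fun x _ => Finset.sum_congr rfl fun y _ => by ring_nf
  have hdiag : ∑ x : α, ∑ y : α, q x * q y * (if x = y then (1:ℝ) else 0)
      = ∑ x, q x ^ 2 := by
    refine Finset.sum_congr rfl fun x _ => ?_
    rw [Finset.sum_eq_single x]
    · simp [sq]
    · intro y _ hy; simp [Ne.symm hy]
    · simp
  have hsplit : ∀ x y : α, (if x < y then (1:ℝ) else 0) + (if y < x then 1 else 0)
      + (if x = y then 1 else 0) = 1 := by
    intro x y
    rcases lt_trichotomy x y with h | h | h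
    · simp [h, not_lt_of_gt h, h.ne]
    · simp [h, lt_irrefl]
    · simp [h, not_lt_of_gt h, (h.ne).symm, lt_irrefl]
  have : (∑ x : α, ∑ y : α, q x * q y * (if x < y then (1:ℝ) else 0))
      + (∑ x : α, ∑ y : α, q x * q y * (if y < x then (1:ℝ) else 0))
      + (∑ x : α, ∑ y : α, q x * q y * (if x = y then (1:ℝ) else 0)) = 1 := by
    have h2 : (∑ x : α, ∑ y : α, q x * q y * (if x < y then (1:ℝ) else 0))
        + (∑ x : α, ∑ y : α, q x * q y * (if y < x then (1:ℝ) else 0))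
        + (∑ x : α, ∑ y : α, q x * q y * (if x = y then (1:ℝ) else 0))
        = ∑ x : α, ∑ y : α, q x * q y := by
      rw [← Finset.sum_add_distrib, ← Finset.sum_add_distrib]
      refine Finset.sum_congr rfl fun x _ => ?_
      rw [← Finset.sum_add_distrib, ← Finset.sum_add_distrib]
      refine Finset.sum_congr rfl fun y _ => ?_
      rw [← mul_add, ← mul_add, hsplit, mul_one]
    rw [h2, htot]
  rw [← hsym, hdiag] at this
  linarith

end Marginals


section Expectation
variable {n : ℕ} {α : Type*} [Fintype α] [LinearOrder α]

lemma expectation (hn : 1 ≤ n) (q : α → ℝ) (hq : ∑ x, q x = 1) :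
    ∑ π : Equiv.Perm (Fin n), shuffleP n q π * ((descentSet n π).card : ℝ)
      = 1 + ((n : ℝ) - 1) * ((1 - ∑ x, q x ^ 2) / 2) := by
  have step1 : ∑ π : Equiv.Perm (Fin n), shuffleP n q π * ((descentSet n π).card : ℝ)
      = ∑ f : Fin n → α, (∏ i, q (f i)) * ((descentSet n ((Tuple.sort f)⁻¹)).card : ℝ) := by
    rw [← Finset.sum_fiberwise Finset.univ (fun f : Fin n → α => (Tuple.sort f)⁻¹)
      (fun f => (∏ i, q (f i)) * ((descentSet n ((Tuple.sort f)⁻¹)).card : ℝ))]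
    refine Finset.sum_congr rfl fun π _ => ?_
    rw [shuffleP, Finset.sum_mul]
    refine Finset.sum_congr rfl fun f hf => ?_
    simp only [Finset.mem_filter] at hf
    rw [hf.2]
  rw [step1]
  simp only [descent_card hn, mul_add, mul_one]
  rw [Finset.sum_add_distrib, sum_prod_one q hq]
  congr 1
  have swap : ∑ f : Fin n → α, ∑ i ∈ Finset.Ico 1 n, (∏ j, q (f j)) * desc f i
      = ∑ i ∈ Finset.Ico 1 n, ∑ f : Fin n → α, (∏ j, q (f j)) * desc f i :=
    Finset.sum_comm
  simp only [Finset.mul_sum]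
  rw [swap]
  have hinner : ∀ i ∈ Finset.Ico 1 n,
      ∑ f : Fin n → α, (∏ j, q (f j)) * desc f i = (1 - ∑ x, q x ^ 2) / 2 := by
    intro i hi
    rw [Finset.mem_Ico] at hi
    have h2 : i < n := hi.2
    have h2' : i - 1 < n := lt_of_le_of_lt (Nat.sub_le _ _) h2
    have hd : ∀ f : Fin n → α, desc f i
        = (fun x y => if x < y then (1:ℝ) else 0) (f ⟨i, h2⟩) (f ⟨i - 1, h2'⟩) :=
      fun f => dif_pos h2
    simp only [hd]
    have hne : (⟨i, h2⟩ : Fin n) ≠ ⟨i - 1, h2'⟩ := by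
      simp only [ne_eq, Fin.mk.injEq]
      omega
    rw [marginal2 q hq ⟨i, h2⟩ ⟨i - 1, h2'⟩ hne (fun x y => if x < y then (1:ℝ) else 0)]
    exact sum_lt_pairs q hq
  rw [Finset.sum_congr rfl hinner, Finset.sum_const, Nat.card_Ico, nsmul_eq_mul]
  congr 1
  push_cast [Nat.cast_sub hn]
  ring

end Expectation

lemma conv_repr (n a : ℕ) (p : Fin a → ℝ) (hs : ∑ i, p i = 1) (k : ℕ) :
    ∃ (γ : Type) (_ : Fintype γ) (_ : LinearOrder γ) (r : γ → ℝ),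
      (∀ π : Equiv.Perm (Fin n), convPow n (shuffleP n p) k π = shuffleP n r π) ∧
      (∑ c, r c = 1) ∧ (∑ c, r c ^ 2 = (∑ i, p i ^ 2) ^ k) := by
  induction k with
  | zero =>
    refine ⟨Unit, inferInstance, inferInstance, fun _ => 1, ?_, by simp, by simp⟩
    intro π
    have hs1 : ∀ f : Fin n → Unit, Tuple.sort f = 1 := by
      intro f
      have : Tuple.sort f = Equiv.refl _ :=
        Tuple.sort_eq_refl_iff_monotone.mpr (fun _ _ _ => le_rfl)
      rw [this]
      rfl
    by_cases hπ : π = 1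
    · subst hπ
      simp [convPow, shuffleP, hs1]
    · simp [convPow, shuffleP, hs1, hπ, Ne.symm hπ]
  | succ k ih =>
    obtain ⟨γ, iF, iL, r, hconv, hsum, hsq⟩ := ih
    letI := iF
    letI := iL
    refine ⟨Lex (Fin a × γ), inferInstance, inferInstance,
      fun c => p (ofLex c).1 * r (ofLex c).2, ?_, ?_, ?_⟩
    · intro π
      rw [show convPow n (shuffleP n p) (k + 1)
          = fun π => ∑ σ : Equiv.Perm (Fin n),
              shuffleP n p σ * convPow n (shuffleP n p) k (σ⁻¹ * π) from rfl]
      simp only [hconv]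
      exact shuffle_conv p r π
    · rw [← Equiv.sum_comp (toLex : Fin a × γ ≃ Lex (Fin a × γ))
        (fun c => p (ofLex c).1 * r (ofLex c).2)]
      simp only [ofLex_toLex]
      rw [Fintype.sum_prod_type]
      simp only [← Finset.mul_sum, hsum, mul_one]
      exact hs
    · rw [← Equiv.sum_comp (toLex : Fin a × γ ≃ Lex (Fin a × γ))
        (fun c => (p (ofLex c).1 * r (ofLex c).2) ^ 2)]
      simp only [ofLex_toLex, mul_pow]
      rw [Fintype.sum_prod_type]
      simp only [← Finset.mul_sum, hsq, ← Finset.sum_mul]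
      rw [pow_succ]
      ring

/-- Under the `k`-fold convolution of the biased riffle shuffle `P_{n,a,p}`, with the
convention that every permutation has a descent at position `n`, the expected number
of descents is `1 + ((n−1)/2) (1 − (p₁² + ⋯ + p_a²)^k)`. -/
theorem stmt11 (n a k : ℕ) (hn : 1 ≤ n) (p : Fin a → ℝ)
    (hp : ∀ i, 0 ≤ p i) (hs : ∑ i, p i = 1) :
    ∑ π : Equiv.Perm (Fin n),
        convPow n (shuffleP n p) k π * ((descentSet n π).card : ℝ) =
      1 + ((n : ℝ) - 1) / 2 * (1 - (∑ i, p i ^ 2) ^ k) := by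
  obtain ⟨γ, iF, iL, r, hconv, hsum, hsq⟩ := conv_repr n a p hs k
  letI := iF
  letI := iL
  simp only [hconv]
  rw [expectation hn r hsum, hsq]
  ring
end

section
/- For b_1,...,b_a nonnegative integers with b_1+...+b_a = n, the Gaussian (q-)multinomial coefficient [n]!/([b_1]!···[b_a]!) equals the sum of q^{Inv(π)} over all permutations π ∈ S_n whose descent set is contained in {b_1, b_1+b_2, ..., b_1+...+b_a = n}. -/
open Finset Polynomial


/-- The set of partial sums `{b₁, b₁+b₂, …, b₁+⋯+b_a}`. -/
def partialSums (a : ℕ) (b : ℕ → ℕ) : Finset ℕ :=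
  (Finset.range a).image fun j => ∑ i ∈ Finset.range (j + 1), b i

/-- The number of inversions of `π`: the number of pairs `i < j` with `π(i) > π(j)`. -/
def invCount (n : ℕ) (π : Equiv.Perm (Fin n)) : ℕ :=
  ((Finset.univ ×ˢ Finset.univ).filter
    fun q : Fin n × Fin n => q.1 < q.2 ∧ π q.2 < π q.1).card

/-- The `q`-factorial `[m]! = ∏_{i=0}^{m-1} (1 + q + ⋯ + q^i)` in `ℤ[q]`. -/
noncomputable def qfact (m : ℕ) : Polynomial ℤ :=
  ∏ i ∈ Finset.range m, ∑ j ∈ Finset.range (i + 1), Polynomial.X ^ j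

noncomputable def polyOne (m : ℕ) : Polynomial ℤ := ∑ j ∈ Finset.range m, Polynomial.X ^ j


lemma qfact_succ (m : ℕ) : qfact (m+1) = qfact m * polyOne (m+1) := by
  simp [qfact, polyOne, Finset.prod_range_succ]

lemma qfact_of_pos {m : ℕ} (h : 1 ≤ m) : qfact m = qfact (m-1) * polyOne m := by
  rcases m with _ | k
  · omega
  · simpa using qfact_succ k

/-- the largest element of `T` smaller than `t`, or `0`. -/
def prevT (T : Finset ℕ) (t : ℕ) : ℕ := WithBot.unbotD 0 ((T.filter (fun x => x < t)).max)

lemma prevT_lt {T : Finset ℕ} {t : ℕ} (ht : 1 ≤ t) : prevT T t < t := by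
  unfold prevT
  rcases h : (T.filter (fun x => x < t)).max with _ | v
  · exact ht
  · have := Finset.mem_filter.mp (Finset.mem_of_max h)
    exact this.2

lemma le_prevT {T : Finset ℕ} {t x : ℕ} (hx : x ∈ T) (hxt : x < t) : x ≤ prevT T t := by
  have hmem : x ∈ T.filter (fun x => x < t) := Finset.mem_filter.mpr ⟨hx, hxt⟩
  have hle := Finset.le_max hmem
  unfold prevT
  rcases h : (T.filter (fun x => x < t)).max with _ | v
  · rw [h] at hle; exact absurd hle (WithBot.not_coe_le_bot x)
  · rw [h] at hle
    exact WithBot.coe_le_coe.mp hle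

lemma prevT_mem_or_zero (T : Finset ℕ) (t : ℕ) : prevT T t ∈ T ∨ prevT T t = 0 := by
  unfold prevT
  rcases h : (T.filter (fun x => x < t)).max with _ | v
  · right; rfl
  · left
    have := Finset.mem_of_max h
    exact (Finset.mem_filter.mp this).1

/-- interval decomposition -/
lemma sum_intervals (T : Finset ℕ) (n : ℕ) (hn : n ∈ T) (hle : ∀ t ∈ T, t ≤ n) :
    ∑ t ∈ T, Polynomial.X ^ (n - t) * polyOne (t - prevT T t) = (polyOne n : Polynomial ℤ) := by
  have hterm : ∀ t ∈ T, Polynomial.X ^ (n - t) * polyOne (t - prevT T t)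
      = ∑ v ∈ Finset.Ico (n - t) (n - prevT T t), (Polynomial.X : Polynomial ℤ) ^ v := by
    intro t ht
    rw [Finset.sum_Ico_eq_sum_range]
    have h1 : n - prevT T t - (n - t) = t - prevT T t := by
      have := hle t ht
      have h2 : prevT T t ≤ t := by
        rcases Nat.eq_zero_or_pos t with rfl | hp
        · simp [prevT]
        · exact (prevT_lt hp).le
      omega
    rw [h1, polyOne, Finset.mul_sum]
    refine Finset.sum_congr rfl fun u _ => ?_
    rw [← pow_add]
  rw [Finset.sum_congr rfl hterm]
  have key : ∀ x ∈ T, ∀ y ∈ T, x < y →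
      Disjoint (Finset.Ico (n - x) (n - prevT T x)) (Finset.Ico (n - y) (n - prevT T y)) := by
    intro x hx y hy hlt
    have hxp : x ≤ prevT T y := le_prevT hx hlt
    rw [Finset.disjoint_left]
    intro v hv1 hv2
    have h1 := Finset.mem_Ico.mp hv1
    have h2 := Finset.mem_Ico.mp hv2
    have hyn := hle y hy
    omega
  have hdisj : (↑T : Set ℕ).PairwiseDisjoint
      (fun t => Finset.Ico (n - t) (n - prevT T t)) := by
    intro x hx y hy hxy
    simp only [Finset.mem_coe] at hx hy
    rcases lt_trichotomy x y with h | h | h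
    · exact key x hx y hy h
    · exact absurd h hxy
    · exact (key y hy x hx h).symm
  rw [← Finset.sum_biUnion hdisj]
  have hcover : T.biUnion (fun t => Finset.Ico (n - t) (n - prevT T t)) = Finset.range n := by
    ext v
    simp only [Finset.mem_biUnion, Finset.mem_Ico, Finset.mem_range]
    constructor
    · rintro ⟨t, ht, h1, h2⟩
      have h3 : prevT T t < t ∨ t = 0 := by
        rcases Nat.eq_zero_or_pos t with rfl | hp
        · right; rfl
        · left; exact prevT_lt hp
      have := hle t ht
      omega
    · intro hv
      have hne : (T.filter (fun t => n - v ≤ t)).Nonempty :=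
        ⟨n, Finset.mem_filter.mpr ⟨hn, by omega⟩⟩
      obtain ⟨t, htT, htge, hmin⟩ : ∃ t, t ∈ T ∧ n - v ≤ t ∧ ∀ y ∈ T, n - v ≤ y → t ≤ y := by
        refine ⟨(T.filter (fun t => n - v ≤ t)).min' hne, ?_, ?_, ?_⟩
        · exact (Finset.mem_filter.mp (Finset.min'_mem _ hne)).1
        · exact (Finset.mem_filter.mp (Finset.min'_mem _ hne)).2
        · intro y hy hvy
          exact Finset.min'_le _ y (Finset.mem_filter.mpr ⟨hy, hvy⟩)
      refine ⟨t, htT, by omega, ?_⟩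
      have hprev : prevT T t < n - v := by
        by_contra hc
        push_neg at hc
        rcases prevT_mem_or_zero T t with hm | hz
        · have hlt : prevT T t < t := by
            apply prevT_lt
            omega
          have := hmin _ hm hc
          omega
        · omega
      omega
  rw [hcover]
  rfl

lemma prevT_eq_of {T : Finset ℕ} {t y : ℕ} (hy : y ∈ T) (hyt : y < t)
    (hmax : ∀ x ∈ T, x < t → x ≤ y) : prevT T t = y := by
  have h1 : y ≤ prevT T t := le_prevT hy hyt
  have h2 : prevT T t ≤ y := by
    rcases prevT_mem_or_zero T t with hm | hz
    · exact hmax _ hm (prevT_lt (by omega))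
    · omega
  omega

lemma prevT_eq_zero_of {T : Finset ℕ} {t : ℕ} (h : ∀ x ∈ T, ¬ x < t) : prevT T t = 0 := by
  unfold prevT
  have : T.filter (fun x => x < t) = ∅ := by
    apply Finset.filter_eq_empty_iff.mpr
    intro x hx; exact h x hx
  rw [this]
  rfl

lemma exists_reduced (a n t : ℕ) (ha : 1 ≤ a) (b : ℕ → ℕ)
    (hb : ∑ i ∈ Finset.range a, b i = n)
    (ht : t ∈ partialSums a b) (ht1 : 1 ≤ t) :
    ∃ c : ℕ → ℕ, (∑ i ∈ Finset.range a, c i = n - 1) ∧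
      partialSums a c =
        (partialSums a b).image (fun x => if x ≤ t - 1 then x else x - 1) ∧
      (∏ i ∈ Finset.range a, qfact (b i)) =
        (∏ i ∈ Finset.range a, qfact (c i)) * polyOne (t - prevT (partialSums a b) t) := by
  have hmono : ∀ ⦃m m' : ℕ⦄, m ≤ m' →
      (∑ i ∈ Finset.range (m+1), b i) ≤ ∑ i ∈ Finset.range (m'+1), b i := by
    intro m m' h
    exact Finset.sum_le_sum_of_subset (Finset.range_subset_range.mpr (by omega))
  obtain ⟨j0, hj0a, hj0⟩ := Finset.mem_image.mp ht
  simp only [Finset.mem_range] at hj0a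
  have hex : ∃ j, (∑ i ∈ Finset.range (j+1), b i) = t := ⟨j0, hj0⟩
  obtain ⟨j, hja, hsj, hjmin⟩ : ∃ j, j < a ∧ (∑ i ∈ Finset.range (j+1), b i) = t ∧
      ∀ j' < j, (∑ i ∈ Finset.range (j'+1), b i) ≠ t := by
    refine ⟨Nat.find hex, ?_, Nat.find_spec hex, fun j' hj' => Nat.find_min hex hj'⟩
    have := Nat.find_min' hex hj0
    omega
  have hsplit : ∀ m : ℕ, (∑ i ∈ Finset.range (m+1), b i)
      = (∑ i ∈ Finset.range m, b i) + b m := fun m => Finset.sum_range_succ b m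
  have hbj : 1 ≤ b j := by
    rcases Nat.eq_zero_or_pos j with rfl | hj
    · have h0 : b 0 = t := by simpa using hsj
      omega
    · have h1 := hjmin (j-1) (by omega)
      have h2 := hmono (show j-1 ≤ j by omega)
      have h3 := hsplit j
      have h4 : j - 1 + 1 = j := by omega
      rw [h4] at h1 h2
      omega
  have hprev : prevT (partialSums a b) t = ∑ i ∈ Finset.range j, b i := by
    rcases Nat.eq_zero_or_pos j with rfl | hj
    · simp only [Finset.range_zero, Finset.sum_empty]
      apply prevT_eq_zero_of
      intro x hx
      obtain ⟨m, hma, hm⟩ := Finset.mem_image.mp hx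
      have := hmono (show 0 ≤ m by omega)
      omega
    · have h4 : j - 1 + 1 = j := by omega
      have hmem : (∑ i ∈ Finset.range j, b i) ∈ partialSums a b := by
        refine Finset.mem_image.mpr ⟨j-1, Finset.mem_range.mpr (by omega), by rw [h4]⟩
      apply prevT_eq_of hmem
      · have h1 := hjmin (j-1) (by omega)
        have h2 := hmono (show j-1 ≤ j by omega)
        rw [h4] at h1 h2
        omega
      · intro x hx hxt
        obtain ⟨m, hma, hm⟩ := Finset.mem_image.mp hx
        rcases Nat.lt_or_ge m j with h | h
        · have h5 := hmono (show m ≤ j-1 by omega)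
          rw [h4] at h5
          have h6 := hsplit j
          omega
        · have := hmono (show j ≤ m by omega)
          omega
  refine ⟨Function.update b j (b j - 1), ?_, ?_, ?_⟩
  · rw [Finset.sum_update_of_mem (Finset.mem_range.mpr hja)]
    have h5 : ∑ i ∈ Finset.range a, b i
        = (∑ i ∈ Finset.range a \ {j}, b i) + b j :=
      (Finset.sum_eq_sum_sdiff_singleton_add (Finset.mem_range.mpr hja) b)
    omega
  · have hps : ∀ m < a, (∑ i ∈ Finset.range (m + 1), Function.update b j (b j - 1) i)
        = (fun x => if x ≤ t - 1 then x else x - 1) (∑ i ∈ Finset.range (m+1), b i) := by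
      intro m hm
      dsimp only
      rcases Nat.lt_or_ge m j with h | h
      · rw [Finset.sum_update_of_notMem (by simp; omega)]
        have h1 := hjmin m h
        have h2 := hmono (show m ≤ j by omega)
        rw [if_pos (by omega)]
      · rw [Finset.sum_update_of_mem (Finset.mem_range.mpr (by omega))]
        have h2 := hmono (show j ≤ m by omega)
        have h3 : (∑ i ∈ Finset.range (m+1), b i)
            = (∑ i ∈ Finset.range (m+1) \ {j}, b i) + b j :=
          Finset.sum_eq_sum_sdiff_singleton_add (Finset.mem_range.mpr (by omega)) b
        rw [if_neg (by omega)]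
        omega
    unfold partialSums
    rw [Finset.image_image]
    apply Finset.image_congr
    intro m hm
    simp only [Finset.mem_coe, Finset.mem_range] at hm
    exact hps m hm
  · rw [hprev]
    have hbjval : b j = t - ∑ i ∈ Finset.range j, b i := by
      have := hsplit j; omega
    have hupd : ∀ i, qfact (Function.update b j (b j - 1) i)
        = Function.update (fun i => qfact (b i)) j (qfact (b j - 1)) i := by
      intro i
      rcases eq_or_ne i j with rfl | h
      · simp
      · simp [Function.update_of_ne h]
    rw [Finset.prod_congr rfl (fun i _ => hupd i)]
    rw [Finset.prod_update_of_mem (Finset.mem_range.mpr hja)]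
    rw [Finset.prod_eq_prod_diff_singleton_mul (Finset.mem_range.mpr hja) (fun i => qfact (b i))]
    rw [qfact_of_pos hbj]
    rw [← hbjval]
    ring

/-! ### insertion machinery -/

def insPosF (m p : ℕ) (x : Fin m) : Fin (m + 1) :=
  if (x : ℕ) < p then x.castSucc else x.succ

lemma insPosF_val (m p : ℕ) (x : Fin m) :
    ((insPosF m p x : Fin (m+1)) : ℕ) = if (x : ℕ) < p then (x : ℕ) else (x : ℕ) + 1 := by
  unfold insPosF
  split <;> simp

lemma insPosF_strictMono (m p : ℕ) : StrictMono (insPosF m p) := by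
  intro x y hxy
  have hx := insPosF_val m p x
  have hy := insPosF_val m p y
  rw [Fin.lt_def] at hxy ⊢
  split at hx <;> split at hy <;> omega

lemma insPosF_ne (m p : ℕ) (x : Fin m) : ((insPosF m p x : Fin (m+1)) : ℕ) ≠ p := by
  have hx := insPosF_val m p x
  split at hx <;> omega

lemma insPosF_surj (m p : ℕ) (i : Fin (m+1)) (h : (i : ℕ) ≠ p) (hp : p < m + 1) :
    ∃ x : Fin m, insPosF m p x = i := by
  rcases Nat.lt_or_ge (i : ℕ) p with hlt | hge
  · have hb : (i : ℕ) < m := by have := i.isLt; omega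
    refine ⟨⟨i, hb⟩, ?_⟩
    apply Fin.ext
    rw [insPosF_val]
    simp [hlt]
  · have h1 : 1 ≤ (i : ℕ) := by omega
    have hb : (i : ℕ) - 1 < m := by have := i.isLt; omega
    refine ⟨⟨(i : ℕ) - 1, hb⟩, ?_⟩
    apply Fin.ext
    rw [insPosF_val]
    simp only
    split <;> omega

def insFun (m p : ℕ) (hp : p < m + 1) (σ : Equiv.Perm (Fin m)) (i : Fin (m+1)) : Fin (m+1) :=
  if h : (i : ℕ) = p then Fin.last m
  else if h2 : (i : ℕ) < p then (σ ⟨i, by omega⟩).castSucc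
  else (σ ⟨(i : ℕ) - 1, by have := i.isLt; omega⟩).castSucc

lemma insFun_injective (m p : ℕ) (hp : p < m + 1) (σ : Equiv.Perm (Fin m)) :
    Function.Injective (insFun m p hp σ) := by
  intro i i' h
  unfold insFun at h
  have hne : ∀ y : Fin m, (Fin.castSucc y : Fin (m+1)) ≠ Fin.last m :=
    fun y => ne_of_lt (Fin.castSucc_lt_last y)
  split_ifs at h with h1 h2 h3 h4 h5 h6 h7
  · apply Fin.ext; omega
  all_goals first
    | (exact absurd h.symm (hne _))
    | (exact absurd h (hne _))
    | (apply Fin.ext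
       have h9 := σ.injective (Fin.castSucc_inj.mp h)
       have h10 : _ = _ := congrArg Fin.val h9
       simp only [Fin.val_mk] at h10
       omega)

noncomputable def insP (m p : ℕ) (hp : p < m + 1) (σ : Equiv.Perm (Fin m)) : Equiv.Perm (Fin (m+1)) :=
  Equiv.ofBijective _ (Finite.injective_iff_bijective.mp (insFun_injective m p hp σ))

lemma insP_apply (m p : ℕ) (hp : p < m + 1) (σ : Equiv.Perm (Fin m)) (i : Fin (m+1)) :
    insP m p hp σ i = insFun m p hp σ i := rfl

lemma insP_apply_p (m p : ℕ) (hp : p < m + 1) (σ : Equiv.Perm (Fin m)) :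
    insP m p hp σ ⟨p, hp⟩ = Fin.last m := by
  rw [insP_apply]
  unfold insFun
  rw [dif_pos rfl]

lemma insP_apply_insPosF (m p : ℕ) (hp : p < m + 1) (σ : Equiv.Perm (Fin m)) (x : Fin m) :
    insP m p hp σ (insPosF m p x) = (σ x).castSucc := by
  rw [insP_apply]
  unfold insFun
  have hx := insPosF_val m p x
  rw [dif_neg (insPosF_ne m p x)]
  split at hx
  · rw [dif_pos (by omega)]
    congr 1
    apply Fin.ext
    simp [hx]
  · rw [dif_neg (by omega)]
    congr 1
    apply Fin.ext
    simp [hx]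

lemma permVal_insP (m p : ℕ) (hp : p < m + 1) (σ : Equiv.Perm (Fin m)) (i : ℕ) :
    permVal (m+1) (insP m p hp σ) i =
      if i = p then m
      else if i < p then permVal m σ i
      else if i < m + 1 then permVal m σ (i - 1) else 0 := by
  unfold permVal
  rcases Nat.lt_or_ge i (m+1) with h | h
  · rw [dif_pos h, insP_apply]
    unfold insFun
    rcases eq_or_ne i p with rfl | hne
    · rw [dif_pos rfl, if_pos rfl]
      simp [Fin.val_last]
    · rw [dif_neg (by simpa using hne), if_neg hne]
      rcases Nat.lt_or_ge i p with h2 | h2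
      · rw [dif_pos (by simpa using h2), if_pos h2, dif_pos (by omega)]
        simp
      · rw [dif_neg (by simp; omega), if_neg (by omega), if_pos h,
          dif_pos (by omega)]
        simp
  · rw [dif_neg (by omega), if_neg (by omega), if_neg (by omega), if_neg (by omega)]

lemma permVal_lt (m : ℕ) (σ : Equiv.Perm (Fin m)) (i : ℕ) (h : i < m) :
    permVal m σ i < m := by
  unfold permVal
  rw [dif_pos h]
  exact (σ ⟨i, h⟩).isLt

lemma invCount_insP (m p : ℕ) (hp : p < m + 1) (σ : Equiv.Perm (Fin m)) :
    invCount (m+1) (insP m p hp σ) = invCount m σ + (m - p) := by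
  classical
  set π := insP m p hp σ with hπ
  set pF : Fin (m+1) := ⟨p, hp⟩ with hpF
  unfold invCount
  rw [← Finset.card_filter_add_card_filter_not
    (s := (Finset.univ ×ˢ Finset.univ).filter
      fun q : Fin (m+1) × Fin (m+1) => q.1 < q.2 ∧ π q.2 < π q.1)
    (p := fun q => q.1 = pF)]
  have hIoi : (Finset.Ioi pF).card = m - p := by rw [Fin.card_Ioi]; simp [hpF]
  have hA : (((Finset.univ ×ˢ Finset.univ).filter
      fun q : Fin (m+1) × Fin (m+1) => q.1 < q.2 ∧ π q.2 < π q.1).filter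
        fun q => q.1 = pF).card = m - p := by
    rw [← hIoi]
    apply Finset.card_bij (fun q _ => q.2)
    · rintro ⟨i, j⟩ hq
      simp only [Finset.mem_filter, Finset.mem_product] at hq
      obtain ⟨⟨-, hlt, -⟩, h1⟩ := hq
      subst h1
      simpa using hlt
    · rintro ⟨i, j⟩ hq ⟨i', j'⟩ hq' h
      simp only [Finset.mem_filter] at hq hq'
      exact Prod.ext_iff.mpr ⟨hq.2.trans hq'.2.symm, h⟩
    · intro j hj
      simp only [Finset.mem_Ioi] at hj
      refine ⟨(pF, j), ?_, rfl⟩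
      simp only [Finset.mem_filter, Finset.mem_product]
      refine ⟨⟨⟨Finset.mem_univ _, Finset.mem_univ _⟩, hj, ?_⟩, trivial⟩
      have h1 : π pF = Fin.last m := insP_apply_p m p hp σ
      rw [h1]
      have h2 : π j ≠ Fin.last m := by
        intro hc
        have := π.injective (hc.trans h1.symm)
        exact absurd this (ne_of_gt hj)
      exact lt_of_le_of_ne (Fin.le_last _) h2
  have hB : (((Finset.univ ×ˢ Finset.univ).filter
      fun q : Fin (m+1) × Fin (m+1) => q.1 < q.2 ∧ π q.2 < π q.1).filter
        fun q => ¬ q.1 = pF).card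
      = ((Finset.univ ×ˢ Finset.univ).filter
        fun q : Fin m × Fin m => q.1 < q.2 ∧ σ q.2 < σ q.1).card := by
    symm
    apply Finset.card_bij (fun q _ => (insPosF m p q.1, insPosF m p q.2))
    · rintro ⟨x, y⟩ hq
      simp only [Finset.mem_filter, Finset.mem_product] at hq ⊢
      obtain ⟨-, hlt, hinv⟩ := hq
      refine ⟨⟨⟨Finset.mem_univ _, Finset.mem_univ _⟩,
        insPosF_strictMono m p hlt, ?_⟩, ?_⟩
      · rw [hπ, insP_apply_insPosF, insP_apply_insPosF]
        exact Fin.castSucc_lt_castSucc_iff.mpr hinv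
      · intro hc
        exact insPosF_ne m p x (by rw [hc])
    · rintro ⟨x, y⟩ - ⟨x', y'⟩ - h
      simp only [Prod.mk.injEq] at h
      have h1 := (insPosF_strictMono m p).injective h.1
      have h2 := (insPosF_strictMono m p).injective h.2
      exact Prod.ext_iff.mpr ⟨h1, h2⟩
    · rintro ⟨i, j⟩ hq
      simp only [Finset.mem_filter, Finset.mem_product] at hq
      obtain ⟨⟨-, hlt, hinv⟩, hne⟩ := hq
      have hjne : j ≠ pF := by
        intro hc
        subst hc
        rw [hπ, insP_apply_p] at hinv
        exact absurd hinv (not_lt.mpr (Fin.le_last _))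
      obtain ⟨x, hx⟩ := insPosF_surj m p i (fun hc => hne (Fin.ext hc)) hp
      obtain ⟨y, hy⟩ := insPosF_surj m p j (fun hc => hjne (Fin.ext hc)) hp
      refine ⟨(x, y), ?_, by rw [hx, hy]⟩
      simp only [Finset.mem_filter, Finset.mem_product]
      subst hx hy
      refine ⟨⟨Finset.mem_univ _, Finset.mem_univ _⟩,
        (insPosF_strictMono m p).lt_iff_lt.mp hlt, ?_⟩
      rw [hπ, insP_apply_insPosF, insP_apply_insPosF] at hinv
      exact Fin.castSucc_lt_castSucc_iff.mp hinv
  rw [hA, hB]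
  all_goals try rw [Nat.add_comm]
  all_goals try rfl

lemma descent_insP_subset (m p : ℕ) (hp : p < m + 1) (σ : Equiv.Perm (Fin m))
    (T : Finset ℕ) (hnT : m + 1 ∈ T) (hpT : p + 1 ∈ T)
    (hσ : descentSet m σ ⊆ T.image (fun x => if x ≤ p then x else x - 1)) :
    descentSet (m+1) (insP m p hp σ) ⊆ T := by
  intro i hi
  simp only [descentSet, Finset.mem_insert, Finset.mem_filter, Finset.mem_Ico] at hi
  rcases hi with rfl | ⟨⟨h1, h2⟩, hdesc⟩
  · exact hnT
  rw [permVal_insP, permVal_insP] at hdesc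
  rcases Nat.lt_or_ge i p with h | h
  · -- i < p : descent of σ at i
    rw [if_neg (show ¬ i = p by omega), if_pos (show i < p by omega),
      if_neg (show ¬ i - 1 = p by omega), if_pos (show i - 1 < p by omega)] at hdesc
    have hmem : i ∈ descentSet m σ := by
      simp only [descentSet, Finset.mem_insert, Finset.mem_filter, Finset.mem_Ico]
      exact Or.inr ⟨⟨h1, by omega⟩, hdesc⟩
    obtain ⟨x0, hx0, hfx0⟩ := Finset.mem_image.mp (hσ hmem)
    split at hfx0
    · exact hfx0 ▸ hx0
    · exfalso; omega
  rcases Nat.eq_or_lt_of_le h with heq | h'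
  · -- i = p: impossible
    exfalso
    rw [if_pos (show i = p by omega), if_neg (show ¬ i - 1 = p by omega),
      if_pos (show i - 1 < p by omega)] at hdesc
    have := permVal_lt m σ (i - 1) (by omega)
    omega
  rcases Nat.eq_or_lt_of_le h' with heq | h''
  · -- i = p + 1
    have hip : i = p + 1 := by omega
    exact hip ▸ hpT
  · -- i > p + 1 : descent of σ at i - 1
    rw [if_neg (show ¬ i = p by omega), if_neg (show ¬ i < p by omega),
      if_pos (show i < m + 1 by omega),
      if_neg (show ¬ i - 1 = p by omega), if_neg (show ¬ i - 1 < p by omega),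
      if_pos (show i - 1 < m + 1 by omega)] at hdesc
    have hmem : i - 1 ∈ descentSet m σ := by
      simp only [descentSet, Finset.mem_insert, Finset.mem_filter, Finset.mem_Ico]
      exact Or.inr ⟨⟨by omega, by omega⟩, hdesc⟩
    obtain ⟨x0, hx0, hfx0⟩ := Finset.mem_image.mp (hσ hmem)
    split at hfx0
    · exfalso; omega
    · have hx0i : x0 = i := by omega
      exact hx0i ▸ hx0

lemma descent_of_insP (m p : ℕ) (hp : p < m + 1) (σ : Equiv.Perm (Fin m))
    (T : Finset ℕ) (hnT : m + 1 ∈ T) (hpT : p + 1 ∈ T)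
    (hins : descentSet (m+1) (insP m p hp σ) ⊆ T) :
    descentSet m σ ⊆ T.image (fun x => if x ≤ p then x else x - 1) := by
  intro i hi
  simp only [descentSet, Finset.mem_insert, Finset.mem_filter, Finset.mem_Ico] at hi
  rcases hi with hieq | ⟨⟨h1, h2⟩, hdesc⟩
  · refine Finset.mem_image.mpr ⟨m + 1, hnT, ?_⟩
    rw [if_neg (show ¬ m + 1 ≤ p by omega)]
    omega
  rcases Nat.lt_or_ge i p with h | h
  · have hmem : i ∈ descentSet (m+1) (insP m p hp σ) := by
      simp only [descentSet, Finset.mem_insert, Finset.mem_filter, Finset.mem_Ico]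
      refine Or.inr ⟨⟨h1, by omega⟩, ?_⟩
      show permVal (m+1) (insP m p hp σ) i < permVal (m+1) (insP m p hp σ) (i - 1)
      rw [permVal_insP, permVal_insP, if_neg (show ¬ i = p by omega),
        if_pos (show i < p by omega), if_neg (show ¬ i - 1 = p by omega),
        if_pos (show i - 1 < p by omega)]
      exact hdesc
    exact Finset.mem_image.mpr ⟨i, hins hmem, by rw [if_pos (show i ≤ p by omega)]⟩
  rcases Nat.eq_or_lt_of_le h with heq | h'
  · refine Finset.mem_image.mpr ⟨p + 1, hpT, ?_⟩
    rw [if_neg (show ¬ p + 1 ≤ p by omega)]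
    omega
  · have hmem : i + 1 ∈ descentSet (m+1) (insP m p hp σ) := by
      simp only [descentSet, Finset.mem_insert, Finset.mem_filter, Finset.mem_Ico]
      refine Or.inr ⟨⟨by omega, by omega⟩, ?_⟩
      show permVal (m+1) (insP m p hp σ) (i+1) < permVal (m+1) (insP m p hp σ) i
      rw [permVal_insP, permVal_insP, if_neg (show ¬ i + 1 = p by omega),
        if_neg (show ¬ i + 1 < p by omega), if_pos (show i + 1 < m + 1 by omega),
        if_neg (show ¬ i = p by omega), if_neg (show ¬ i < p by omega),
        if_pos (show i < m + 1 by omega)]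
      have e1 : i + 1 - 1 = i := rfl
      rw [e1]
      exact hdesc
    refine Finset.mem_image.mpr ⟨i + 1, hins hmem, ?_⟩
    rw [if_neg (show ¬ i + 1 ≤ p by omega)]
    omega

lemma insert_sum (m p : ℕ) (hp : p < m + 1) (T : Finset ℕ)
    (hnT : m + 1 ∈ T) (hpT : p + 1 ∈ T) :
    (∑ π ∈ Finset.univ.filter (fun π : Equiv.Perm (Fin (m+1)) =>
        descentSet (m+1) π ⊆ T ∧ ((π.symm (Fin.last m) : ℕ) = p)),
      (Polynomial.X : Polynomial ℤ) ^ invCount (m+1) π)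
    = Polynomial.X ^ (m - p) *
      ∑ σ ∈ Finset.univ.filter (fun σ : Equiv.Perm (Fin m) =>
        descentSet m σ ⊆ T.image (fun x => if x ≤ p then x else x - 1)),
      (Polynomial.X : Polynomial ℤ) ^ invCount m σ := by
  classical
  rw [Finset.mul_sum]
  symm
  apply Finset.sum_bij (fun σ _ => insP m p hp σ)
  · intro σ hσ
    simp only [Finset.mem_filter, Finset.mem_univ, true_and] at hσ ⊢
    refine ⟨descent_insP_subset m p hp σ T hnT hpT hσ, ?_⟩
    have h1 : (insP m p hp σ).symm (Fin.last m) = ⟨p, hp⟩ := by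
      apply (Equiv.symm_apply_eq _).mpr
      exact (insP_apply_p m p hp σ).symm
    rw [h1]
  · intro σ1 h1 σ2 h2 heq
    apply Equiv.ext
    intro x
    have := congrArg (fun π : Equiv.Perm (Fin (m+1)) => π (insPosF m p x)) heq
    simp only [insP_apply_insPosF] at this
    exact Fin.castSucc_inj.mp this
  · intro π hπ
    simp only [Finset.mem_filter, Finset.mem_univ, true_and] at hπ
    obtain ⟨hdesc, hpos⟩ := hπ
    have hππ : π ⟨p, hp⟩ = Fin.last m := by
      have : π.symm (Fin.last m) = ⟨p, hp⟩ := Fin.ext hpos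
      exact ((Equiv.symm_apply_eq _).mp this).symm
    have hval : ∀ x : Fin m, ((π (insPosF m p x)) : ℕ) < m := by
      intro x
      have hne : π (insPosF m p x) ≠ Fin.last m := by
        intro hc
        have := π.injective (hc.trans hππ.symm)
        exact insPosF_ne m p x (by rw [this])
      have := (π (insPosF m p x)).isLt
      have hv : ((π (insPosF m p x)) : ℕ) ≠ m := fun hc => hne (Fin.ext hc)
      omega
    have hinj : Function.Injective (fun x : Fin m => (⟨(π (insPosF m p x) : ℕ), hval x⟩ : Fin m)) := by
      intro x y hxy
      simp only at hxy
      have h := congrArg Fin.val hxy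
      exact (insPosF_strictMono m p).injective (π.injective (Fin.ext h))
    set σ := Equiv.ofBijective _ (Finite.injective_iff_bijective.mp hinj) with hσdef
    have hins : insP m p hp σ = π := by
      apply Equiv.ext
      intro i
      rcases eq_or_ne (i : ℕ) p with hip | hip
      · have : i = ⟨p, hp⟩ := Fin.ext hip
        rw [this, insP_apply_p, hππ]
      · obtain ⟨x, hx⟩ := insPosF_surj m p i hip hp
        rw [← hx, insP_apply_insPosF]
        apply Fin.ext
        simp only [Fin.coe_castSucc, hσdef, Equiv.ofBijective_apply]
    refine ⟨σ, ?_, hins⟩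
    simp only [Finset.mem_filter, Finset.mem_univ, true_and]
    have := descent_of_insP m p hp σ T hnT hpT (by rw [hins]; exact hdesc)
    exact this
  · intro σ hσ
    rw [invCount_insP, pow_add]
    ring

lemma insert_empty (m p : ℕ) (hp : p < m + 1) (T : Finset ℕ)
    (hpT : ¬ (p + 1 ∈ T)) :
    Finset.univ.filter (fun π : Equiv.Perm (Fin (m+1)) =>
        descentSet (m+1) π ⊆ T ∧ ((π.symm (Fin.last m) : ℕ) = p)) = ∅ := by
  classical
  rw [Finset.filter_eq_empty_iff]
  rintro π - ⟨hdesc, hpos⟩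
  have hππ : π ⟨p, hp⟩ = Fin.last m := by
    have : π.symm (Fin.last m) = ⟨p, hp⟩ := Fin.ext hpos
    exact ((Equiv.symm_apply_eq _).mp this).symm
  apply hpT
  rcases Nat.lt_or_ge (p + 1) (m + 1) with h | h
  · apply hdesc
    simp only [descentSet, Finset.mem_insert, Finset.mem_filter, Finset.mem_Ico]
    refine Or.inr ⟨⟨by omega, h⟩, ?_⟩
    show permVal (m+1) π (p+1) < permVal (m+1) π p
    unfold permVal
    rw [dif_pos h, dif_pos hp, hππ]
    have hne : π ⟨p+1, h⟩ ≠ Fin.last m := by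
      intro hc
      have h9 := π.injective (hc.trans hππ.symm)
      have h10 := congrArg Fin.val h9
      simp at h10
    have hlt := (π ⟨p+1, h⟩).isLt
    have hv : ((π ⟨p+1, h⟩) : ℕ) ≠ m := fun hc => hne (Fin.ext hc)
    have hl : ((Fin.last m : Fin (m+1)) : ℕ) = m := rfl
    omega
  · have : p = m := by omega
    subst this
    apply hdesc
    simp [descentSet]

/-- The Gaussian multinomial coefficient `[n]!/([b₁]!⋯[b_a]!)` is the generating
function of inversions over permutations with descent set contained in
`{b₁, b₁+b₂, …, b₁+⋯+b_a = n}`: equivalently (clearing denominators),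
`(∑_π q^{Inv(π)}) ⋅ [b₁]!⋯[b_a]! = [n]!`. -/
theorem stmt12 (n a : ℕ) (ha : 1 ≤ a) (b : ℕ → ℕ)
    (hb : ∑ i ∈ Finset.range a, b i = n) :
    (∑ π ∈ Finset.univ.filter
        (fun π : Equiv.Perm (Fin n) => descentSet n π ⊆ partialSums a b),
        (Polynomial.X : Polynomial ℤ) ^ invCount n π) *
      ∏ i ∈ Finset.range a, qfact (b i) = qfact n := by
  classical
  induction n using Nat.strong_induction_on generalizing a b with
  | _ n IH =>
    match n, IH with
    | 0, _ =>
      have hb0 : ∀ i ∈ Finset.range a, b i = 0 := by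
        intro i hi
        exact (Finset.sum_eq_zero_iff.mp hb) i hi
      have h0T : (0 : ℕ) ∈ partialSums a b := by
        refine Finset.mem_image.mpr ⟨0, Finset.mem_range.mpr (by omega), ?_⟩
        rw [Finset.sum_range_one]
        exact hb0 0 (Finset.mem_range.mpr (by omega))
      have hfil : Finset.univ.filter
          (fun π : Equiv.Perm (Fin 0) => descentSet 0 π ⊆ partialSums a b)
          = Finset.univ := by
        apply Finset.filter_true_of_mem
        intro π _
        intro x hx
        simp only [descentSet, Finset.mem_insert, Finset.mem_filter, Finset.mem_Ico] at hx
        rcases hx with rfl | ⟨⟨h1, h2⟩, -⟩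
        · exact h0T
        · omega
      have huniv : (Finset.univ : Finset (Equiv.Perm (Fin 0))) = {1} := by
        ext π
        simp only [Finset.mem_univ, Finset.mem_singleton, true_iff]
        exact Equiv.ext (fun x => x.elim0)
      have hinv0 : invCount 0 (1 : Equiv.Perm (Fin 0)) = 0 := by
        unfold invCount
        apply Finset.card_eq_zero.mpr
        apply Finset.eq_empty_of_forall_notMem
        rintro ⟨x, y⟩ -
        exact x.elim0
      have hq : ∀ i ∈ Finset.range a, qfact (b i) = 1 := by
        intro i hi
        rw [hb0 i hi]
        rfl
      rw [hfil, huniv, Finset.sum_singleton, hinv0, Finset.prod_congr rfl hq]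
      simp [qfact]
    | (m+1), IH =>
      set T := partialSums a b with hT
      have hnT : m + 1 ∈ T := by
        refine Finset.mem_image.mpr ⟨a - 1, Finset.mem_range.mpr (by omega), ?_⟩
        have e : a - 1 + 1 = a := by omega
        rw [e, hb]
      have hTle : ∀ t ∈ T, t ≤ m + 1 := by
        intro t ht
        obtain ⟨j, hj, hjt⟩ := Finset.mem_image.mp ht
        simp only [Finset.mem_range] at hj
        rw [← hjt, ← hb]
        exact Finset.sum_le_sum_of_subset (Finset.range_subset_range.mpr (by omega))
      -- split the sum by the position of the maximum
      rw [← Finset.sum_fiberwise_of_maps_to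
        (g := fun π : Equiv.Perm (Fin (m+1)) => ((π.symm (Fin.last m)) : ℕ))
        (t := Finset.range (m+1))
        (fun π _ => Finset.mem_range.mpr (π.symm (Fin.last m)).isLt)]
      rw [Finset.sum_mul]
      have hstep : ∀ p ∈ Finset.range (m+1),
          (∑ π ∈ (Finset.univ.filter
              (fun π : Equiv.Perm (Fin (m+1)) => descentSet (m+1) π ⊆ T)).filter
              (fun π => ((π.symm (Fin.last m)) : ℕ) = p),
            (Polynomial.X : Polynomial ℤ) ^ invCount (m+1) π) *
            (∏ i ∈ Finset.range a, qfact (b i))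
          = (if p + 1 ∈ T then
              Polynomial.X ^ (m + 1 - (p+1)) * polyOne (p + 1 - prevT T (p+1)) else 0)
              * qfact m := by
        intro p hp
        rw [Finset.mem_range] at hp
        rw [Finset.filter_filter]
        by_cases hpT : p + 1 ∈ T
        · rw [if_pos hpT]
          obtain ⟨c, hc_sum, hc_ps, hc_prod⟩ :=
            exists_reduced a (m+1) (p+1) ha b hb hpT (by omega)
          have hIH := IH m (by omega) a ha c (by omega)
          rw [insert_sum m p hp T hnT hpT]
          have hps' : Finset.univ.filter (fun σ : Equiv.Perm (Fin m) =>
              descentSet m σ ⊆ T.image (fun x => if x ≤ p then x else x - 1))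
              = Finset.univ.filter (fun σ : Equiv.Perm (Fin m) =>
              descentSet m σ ⊆ partialSums a c) := by
            have e : p + 1 - 1 = p := rfl
            rw [hc_ps, e]
          rw [hps', hc_prod]
          have em : m + 1 - (p + 1) = m - p := by omega
          rw [em]
          calc Polynomial.X ^ (m - p) *
                (∑ σ ∈ Finset.univ.filter (fun σ : Equiv.Perm (Fin m) =>
                  descentSet m σ ⊆ partialSums a c),
                  (Polynomial.X : Polynomial ℤ) ^ invCount m σ) *
                ((∏ i ∈ Finset.range a, qfact (c i)) * polyOne (p + 1 - prevT T (p+1)))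
              = Polynomial.X ^ (m - p) * polyOne (p + 1 - prevT T (p+1)) *
                ((∑ σ ∈ Finset.univ.filter (fun σ : Equiv.Perm (Fin m) =>
                  descentSet m σ ⊆ partialSums a c),
                  (Polynomial.X : Polynomial ℤ) ^ invCount m σ) *
                  (∏ i ∈ Finset.range a, qfact (c i))) := by ring
            _ = Polynomial.X ^ (m - p) * polyOne (p + 1 - prevT T (p+1)) * qfact m := by
                rw [hIH]
        · rw [if_neg hpT, insert_empty m p hp T hpT]
          simp
      rw [Finset.sum_congr rfl hstep, ← Finset.sum_mul]
      have hfinal : (∑ p ∈ Finset.range (m+1),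
          (if p + 1 ∈ T then
            (Polynomial.X : Polynomial ℤ) ^ (m + 1 - (p+1)) * polyOne (p + 1 - prevT T (p+1))
          else 0)) = polyOne (m+1) := by
        rw [Finset.sum_ite, Finset.sum_const_zero, add_zero]
        have hbij : (∑ p ∈ (Finset.range (m+1)).filter (fun p => p + 1 ∈ T),
            (Polynomial.X : Polynomial ℤ) ^ (m + 1 - (p+1)) * polyOne (p + 1 - prevT T (p+1)))
            = ∑ t ∈ T.filter (fun t => 0 < t),
              (Polynomial.X : Polynomial ℤ) ^ (m + 1 - t) * polyOne (t - prevT T t) := by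
          apply Finset.sum_bij (fun p _ => p + 1)
          · intro p hp
            simp only [Finset.mem_filter, Finset.mem_range] at hp ⊢
            exact ⟨hp.2, by omega⟩
          · intro p1 h1 p2 h2 h
            omega
          · intro t ht
            simp only [Finset.mem_filter] at ht
            refine ⟨t - 1, ?_, by omega⟩
            simp only [Finset.mem_filter, Finset.mem_range]
            have := hTle t ht.1
            have e : t - 1 + 1 = t := by omega
            rw [e]
            exact ⟨by omega, ht.1⟩
          · intro p hp
            rfl
        rw [hbij]
        rw [Finset.sum_filter_of_ne]
        · exact sum_intervals T (m+1) hnT hTle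
        · intro t ht hne
          by_contra hc
          push_neg at hc
          apply hne
          have ht0 : t = 0 := by omega
          subst ht0
          have e : (0 : ℕ) - prevT T 0 = 0 := by omega
          rw [e]
          simp [polyOne]
      rw [hfinal]
      have := qfact_succ m
      rw [this]
      ring
end

section
/- Euler's identity: for complex numbers x, q with |x| < 1 and |q| < 1, ∏_{j=0}^∞ 1/(1 − x q^j) = Σ_{j=0}^∞ x^j / ((1−q)(1−q²)···(1−q^j)). -/
open Complex Finset Filter

private lemma euler_aux_prod_ge (s : Finset ℕ) (a : ℕ → ℝ) (h0 : ∀ i, 0 ≤ a i)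
    (h1 : ∀ i, a i ≤ 1) : 1 - ∑ i ∈ s, a i ≤ ∏ i ∈ s, (1 - a i) := by
  induction s using Finset.cons_induction with
  | empty => simp
  | cons k s hk ih =>
    rw [Finset.prod_cons, Finset.sum_cons]
    have hp : (0:ℝ) ≤ ∏ i ∈ s, (1 - a i) :=
      Finset.prod_nonneg fun i _ => by linarith [h1 i]
    have hS : 0 ≤ ∑ i ∈ s, a i := Finset.sum_nonneg fun i _ => h0 i
    nlinarith [h0 k, h1 k]

/-- Euler's identity: for complex `x, q` with `|x| < 1` and `|q| < 1`,
`∏_{j=0}^∞ 1/(1 − x q^j) = ∑_{j=0}^∞ x^j / ((1−q)(1−q²)⋯(1−q^j))`. -/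
theorem stmt15 (x q : ℂ) (hx : ‖x‖ < 1) (hq : ‖q‖ < 1) :
    ∏' j : ℕ, (1 - x * q ^ j)⁻¹ =
      ∑' j : ℕ, x ^ j / ∏ i ∈ Finset.range j, (1 - q ^ (i + 1)) := by
  have hone : ∀ z : ℂ, ‖z‖ < 1 → (1:ℂ) - z ≠ 0 := by
    intro z h h0
    have : z = 1 := by linear_combination -h0
    rw [this] at h; simp at h
  have hr0 : (0:ℝ) ≤ ‖q‖ := norm_nonneg q
  set r : ℝ := ‖q‖ with hrdef
  set D : ℕ → ℂ := fun j => ∏ i ∈ Finset.range j, (1 - q ^ (i+1)) with hD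
  have hrpow : ∀ i : ℕ, r ^ (i+1) < 1 := fun i => pow_lt_one₀ hr0 hq (Nat.succ_ne_zero i)
  have hqpow : ∀ i : ℕ, ‖q ^ (i+1)‖ < 1 := fun i => by rw [norm_pow]; exact hrpow i
  have hfne : ∀ i : ℕ, (1:ℂ) - q^(i+1) ≠ 0 := fun i => hone _ (hqpow i)
  -- choose N making the tail sums small
  obtain ⟨N, hN⟩ : ∃ N : ℕ, r ^ (N+1) * (1 - r)⁻¹ ≤ 1/2 := by
    obtain ⟨n, hn⟩ := exists_pow_lt_of_lt_one (show (0:ℝ) < (1-r)/2 by linarith) hq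
    refine ⟨n, ?_⟩
    have h1 : r ^ (n+1) ≤ r ^ n := pow_le_pow_of_le_one hr0 hq.le (Nat.le_succ n)
    have h2 : r ^ (n+1) ≤ (1-r)/2 := h1.trans hn.le
    have h3 : (0:ℝ) < 1 - r := by linarith
    calc r ^ (n+1) * (1 - r)⁻¹ ≤ (1-r)/2 * (1-r)⁻¹ := by gcongr
      _ = 1/2 := by field_simp
  set Rp : ℕ → ℝ := fun j => ∏ i ∈ Finset.range j, (1 - r^(i+1)) with hRp
  have hRpos : ∀ j, 0 < Rp j := fun j =>
    Finset.prod_pos fun i _ => by linarith [hrpow i]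
  have htail : ∀ m : ℕ, 1/2 ≤ ∏ i ∈ Finset.range m, (1 - r^(N+i+1)) := by
    intro m
    have hb := euler_aux_prod_ge (Finset.range m) (fun i => r^(N+i+1))
      (fun i => pow_nonneg hr0 _) (fun i => (hrpow (N+i)).le)
    have hsum : ∑ i ∈ Finset.range m, r^(N+i+1) ≤ r^(N+1) * (1-r)⁻¹ := by
      have he : ∀ i ∈ Finset.range m, r^(N+i+1) = r^(N+1) * r^i := fun i _ => by ring
      rw [Finset.sum_congr rfl he, ← Finset.mul_sum]
      have hg : ∑ i ∈ Finset.range m, r^i ≤ (1-r)⁻¹ := by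
        have h := Summable.sum_le_tsum (Finset.range m) (fun i _ => pow_nonneg hr0 i)
          (summable_geometric_of_lt_one hr0 hq)
        rwa [tsum_geometric_of_lt_one hr0 hq] at h
      exact mul_le_mul_of_nonneg_left hg (pow_nonneg hr0 _)
    linarith
  set C : ℝ := Rp N * (1/2) with hCdef
  have hC : 0 < C := by
    have := hRpos N; rw [hCdef]; nlinarith
  have hsplit : ∀ a b : ℕ, Rp (a+b) = Rp a * ∏ i ∈ Finset.range b, (1 - r^(a+i+1)) := by
    intro a b
    simpa [hRp] using Finset.prod_range_add (fun i => 1 - r^(i+1)) a b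
  have hRlow : ∀ j, C ≤ Rp j := by
    intro j
    rcases le_total j N with h | h
    · obtain ⟨m, rfl⟩ := Nat.exists_eq_add_of_le h
      have h2 : ∏ i ∈ Finset.range m, (1 - r^(j+i+1)) ≤ 1 :=
        Finset.prod_le_one (fun i _ => by linarith [hrpow (j+i)])
          (fun i _ => by linarith [pow_nonneg hr0 (j+i+1)])
      have h1 : Rp (j+m) ≤ Rp j := by
        rw [hsplit j m]; nlinarith [hRpos j]
      calc C = Rp (j+m) * (1/2) := rfl
        _ ≤ Rp (j+m) := by linarith [hRpos (j+m)]
        _ ≤ Rp j := h1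
    · obtain ⟨m, rfl⟩ := Nat.exists_eq_add_of_le h
      rw [hsplit N m, hCdef]
      exact mul_le_mul_of_nonneg_left (htail m) (hRpos N).le
  have hDnorm : ∀ j, Rp j ≤ ‖D j‖ := by
    intro j
    rw [hD]; simp only [norm_prod]
    apply Finset.prod_le_prod (fun i _ => by linarith [hrpow i])
    intro i _
    have h := norm_sub_norm_le (1:ℂ) (q^(i+1))
    simpa [norm_pow] using h
  have hDlow : ∀ j, C ≤ ‖D j‖ := fun j => (hRlow j).trans (hDnorm j)
  have hD0 : ∀ j, D j ≠ 0 := by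
    intro j h
    have hj := hDlow j
    rw [h, norm_zero] at hj
    linarith
  -- summability of the series
  have hSummable : ∀ y : ℂ, ‖y‖ < 1 → Summable (fun j : ℕ => y ^ j / D j) := by
    intro y hy
    apply Summable.of_norm_bounded (g := fun j => C⁻¹ * ‖y‖^j)
      ((summable_geometric_of_lt_one (norm_nonneg y) hy).mul_left _)
    intro j
    rw [norm_div, norm_pow, inv_mul_eq_div]
    have h' : 0 < ‖D j‖ := lt_of_lt_of_le hC (hDlow j)
    rw [div_le_div_iff₀ h' hC]
    exact mul_le_mul_of_nonneg_left (hDlow j) (pow_nonneg (norm_nonneg y) j)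
  set S : ℂ → ℂ := fun y => ∑' j : ℕ, y ^ j / D j with hSdef
  have hDsucc : ∀ k : ℕ, D (k+1) = D k * (1 - q^(k+1)) := fun k => Finset.prod_range_succ _ k
  -- functional equation
  have key : ∀ y : ℂ, ‖y‖ < 1 → S (y * q) = (1 - y) * S y := by
    intro y hy
    have hyq : ‖y * q‖ < 1 := by
      rw [norm_mul]
      nlinarith [norm_nonneg y, hr0]
    have h1 := hSummable y hy
    have h2 := hSummable (y*q) hyq
    have hdiff : S y - S (y*q) = y * S y := by
      simp only [hSdef]
      rw [← Summable.tsum_sub h1 h2]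
      have hg : Summable (fun j : ℕ => y^j / D j - (y*q)^j / D j) := h1.sub h2
      rw [Summable.tsum_eq_zero_add hg]
      have h0 : y^0 / D 0 - (y*q)^0 / D 0 = 0 := by simp
      rw [h0, zero_add]
      have hterm : ∀ k : ℕ, y^(k+1) / D (k+1) - (y*q)^(k+1) / D (k+1) = y * (y^k / D k) := by
        intro k
        rw [hDsucc k]
        have ha := hD0 k
        have hb := hfne k
        field_simp
        ring
      rw [tsum_congr hterm, tsum_mul_left]
    linear_combination -hdiff
  have hxqn : ∀ n : ℕ, ‖x * q ^ n‖ ≤ ‖x‖ := by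
    intro n
    rw [norm_mul, norm_pow]
    exact mul_le_of_le_one_right (norm_nonneg x) (pow_le_one₀ hr0 hq.le)
  have hxqn' : ∀ n : ℕ, ‖x * q ^ n‖ < 1 := fun n => (hxqn n).trans_lt hx
  -- iterate the functional equation
  have claim : ∀ n : ℕ, S (x * q ^ n) = S x * ∏ k ∈ Finset.range n, (1 - x * q ^ k) := by
    intro n
    induction n with
    | zero => simp
    | succ n ih =>
      have he : x * q ^ (n+1) = (x * q ^ n) * q := by ring
      rw [he, key _ (hxqn' n), ih, Finset.prod_range_succ]
      ring
  -- multipliability of the product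
  have hne : ∀ n : ℕ, (1:ℂ) - x * q ^ n ≠ 0 := fun n => hone _ (hxqn' n)
  have hmul : Multipliable (fun n : ℕ => 1 - x * q ^ n) := by
    have hsum : Summable (fun n : ℕ => Complex.log (1 - x * q ^ n)) := by
      have hgeo : Summable (fun n : ℕ => 3/2 * (‖x‖ * r ^ n)) :=
        ((summable_geometric_of_lt_one hr0 hq).mul_left ‖x‖).mul_left _
      apply hgeo.of_norm_bounded_eventually_nat
      have htend : Tendsto (fun n : ℕ => ‖x‖ * r ^ n) atTop (nhds 0) := by
        simpa using (tendsto_pow_atTop_nhds_zero_of_lt_one hr0 hq).const_mul ‖x‖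
      filter_upwards [htend.eventually_le_const (by norm_num : (0:ℝ) < 1/2)] with n hn
      have hn' : ‖-(x * q ^ n)‖ ≤ 1/2 := by
        rw [norm_neg, norm_mul, norm_pow]; exact hn
      calc ‖Complex.log (1 - x * q ^ n)‖ = ‖Complex.log (1 + -(x * q ^ n))‖ := by
            rw [sub_eq_add_neg]
        _ ≤ 3/2 * ‖-(x * q ^ n)‖ := Complex.norm_log_one_add_half_le_self hn'
        _ = 3/2 * (‖x‖ * r ^ n) := by rw [norm_neg, norm_mul, norm_pow]
    exact Complex.multipliable_of_summable_log hsum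
  set T : ℂ := ∏' n : ℕ, (1 - x * q ^ n) with hTdef
  have hlim1 : Tendsto (fun n : ℕ => S x * ∏ k ∈ Finset.range n, (1 - x * q ^ k))
      atTop (nhds (S x * T)) :=
    hmul.hasProd.tendsto_prod_nat.const_mul (S x)
  -- S y is close to 1 for small y
  have hbound : ∀ y : ℂ, ‖y‖ ≤ ‖x‖ → ‖S y - 1‖ ≤ C⁻¹ * (1 - ‖x‖)⁻¹ * ‖y‖ := by
    intro y hyx
    have hy : ‖y‖ < 1 := lt_of_le_of_lt hyx hx
    have hsum := hSummable y hy
    have hS1 : S y - 1 = ∑' k : ℕ, y^(k+1) / D (k+1) := by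
      simp only [hSdef]
      rw [Summable.tsum_eq_zero_add hsum]
      have h0 : y^0 / D 0 = 1 := by simp [hD]
      rw [h0]; ring
    rw [hS1]
    have hgs : HasSum (fun k : ℕ => C⁻¹ * ‖y‖ * ‖x‖ ^ k) (C⁻¹ * ‖y‖ * (1 - ‖x‖)⁻¹) :=
      (hasSum_geometric_of_lt_one (norm_nonneg x) hx).mul_left (C⁻¹ * ‖y‖)
    refine le_trans (tsum_of_norm_bounded hgs fun k => ?_) (le_of_eq (by ring))
    rw [norm_div, norm_pow]
    calc ‖y‖^(k+1) / ‖D (k+1)‖ ≤ ‖y‖^(k+1) / C := by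
          have h' : 0 < ‖D (k+1)‖ := lt_of_lt_of_le hC (hDlow (k+1))
          rw [div_le_div_iff₀ h' hC]
          exact mul_le_mul_of_nonneg_left (hDlow (k+1)) (pow_nonneg (norm_nonneg y) _)
      _ = C⁻¹ * (‖y‖ * ‖y‖^k) := by rw [pow_succ]; ring
      _ ≤ C⁻¹ * (‖y‖ * ‖x‖^k) := by
          have hpk : ‖y‖^k ≤ ‖x‖^k := pow_le_pow_left₀ (norm_nonneg y) hyx k
          have hCi : (0:ℝ) ≤ C⁻¹ := inv_nonneg.mpr hC.le
          have := mul_le_mul_of_nonneg_left hpk (norm_nonneg y)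
          exact mul_le_mul_of_nonneg_left this hCi
      _ = C⁻¹ * ‖y‖ * ‖x‖^k := by ring
  have hlim2 : Tendsto (fun n : ℕ => S (x * q ^ n)) atTop (nhds 1) := by
    have h0 : Tendsto (fun n : ℕ => S (x * q ^ n) - 1) atTop (nhds 0) := by
      have hgt : Tendsto (fun n : ℕ => C⁻¹ * (1 - ‖x‖)⁻¹ * (‖x‖ * r ^ n)) atTop (nhds 0) := by
        have ht : Tendsto (fun n : ℕ => r ^ n) atTop (nhds 0) :=
          tendsto_pow_atTop_nhds_zero_of_lt_one hr0 hq
        simpa using ((ht.const_mul ‖x‖).const_mul (C⁻¹ * (1 - ‖x‖)⁻¹))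
      apply squeeze_zero_norm _ hgt
      intro n
      have hb := hbound (x * q ^ n) (hxqn n)
      calc ‖S (x * q ^ n) - 1‖ ≤ C⁻¹ * (1 - ‖x‖)⁻¹ * ‖x * q ^ n‖ := hb
        _ = C⁻¹ * (1 - ‖x‖)⁻¹ * (‖x‖ * r ^ n) := by rw [norm_mul, norm_pow]
    have := h0.add_const 1
    simpa using this
  have heq : S x * T = 1 := by
    have hseq : (fun n : ℕ => S x * ∏ k ∈ Finset.range n, (1 - x * q ^ k))
        = fun n : ℕ => S (x * q ^ n) := funext fun n => (claim n).symm
    rw [hseq] at hlim1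
    exact tendsto_nhds_unique hlim1 hlim2
  have hT0 : T ≠ 0 := by
    intro h
    rw [h, mul_zero] at heq
    exact zero_ne_one heq
  have hSx : S x = T⁻¹ := eq_inv_of_mul_eq_one_left heq
  have hprod_inv : HasProd (fun j : ℕ => (1 - x * q ^ j)⁻¹) T⁻¹ := by
    have hcont := ((continuousAt_inv₀ hT0).tendsto).comp hmul.hasProd
    simpa [HasProd, Function.comp_def] using hcont
  rw [hprod_inv.tprod_eq, ← hSx]
end
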